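/- Let Γ be a finite connected pentavalent graph, let G ≤ Aut Γ act arc-transitively on Γ, and let N be a normal subgroup of G. If the stabilizer N_α is nontrivial for some vertex α, then 5 divides |N_α|. -/

import Mathlib

/-- The automorphism group of a simple graph acts on its vertices. -/
instance graphAutMulAction {V : Type*} {Γ : SimpleGraph V} : MulAction (Γ ≃g Γ) V where
  smul g v := g v
  one_smul _ := rfl
  mul_smul _ _ _ := rfl

/-!
The stabilizer `G_α` permutes the five neighbours of `α` transitively, so this local action is
primitive and the normal subgroup `N_α ⊴ G_α` either fixes every neighbour or is transitive on
them; in the latter case the orbit of size `5` has length dividing `|N_α|`. If `N_α` fixed every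
neighbour, then by normality of `N` and vertex-transitivity of `G` every element of `N` fixing a
vertex would fix all its neighbours, hence, by connectedness, every vertex, so `N_α = 1`.
-/

open MulAction

theorem MulAction.card_dvd_card_of_normal_of_prime_card {K X : Type*} [Group K] [MulAction K X]
    [IsPretransitive K X] (hp : (Nat.card X).Prime) {M : Subgroup K} [M.Normal]
    (hM : fixedPoints M X ≠ Set.univ) : Nat.card X ∣ Nat.card M := by
  have : IsPreprimitive K X := IsPreprimitive.of_prime_card hp
  have : IsPretransitive M X := IsQuasiPreprimitive.isPretransitive_of_normal hM
  have : Nonempty X := (Nat.card_ne_zero.mp hp.ne_zero).1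
  rw [← index_stabilizer_of_transitive M (Classical.arbitrary X)]
  exact Subgroup.index_dvd_card _

theorem Subgroup.card_subgroupOf_comm {G : Type*} [Group G] (H K : Subgroup G) :
    Nat.card (H.subgroupOf K) = Nat.card (K.subgroupOf H) := by
  rw [← inf_subgroupOf_right H K, ← inf_subgroupOf_right K H, inf_comm K H,
    Nat.card_congr (subgroupOfEquivOfLe inf_le_right).toEquiv,
    Nat.card_congr (subgroupOfEquivOfLe inf_le_left).toEquiv]

namespace SimpleGraph

variable {V : Type*} {Γ : SimpleGraph V}

theorem Reachable.mem_of_forall_adj_mem {s : Set V} (hs : ∀ ⦃v w⦄, Γ.Adj v w → v ∈ s → w ∈ s)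
    {u v : V} (huv : Γ.Reachable u v) (hu : u ∈ s) : v ∈ s := by
  obtain ⟨p⟩ := huv
  induction p with
  | nil => exact hu
  | cons hadj _ ih => exact ih (hs hadj hu)

theorem Iso.adj_smul_iff (g : Γ ≃g Γ) {v w : V} : Γ.Adj (g • v) (g • w) ↔ Γ.Adj v w :=
  g.map_adj_iff

def neighborSetSubMulAction (G : Subgroup (Γ ≃g Γ)) (α : V) :
    SubMulAction (stabilizer G α) V where
  carrier := Γ.neighborSet α
  smul_mem' g w hw := by
    have hgα : (g : Γ ≃g Γ) • α = α := g.2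
    have := (Iso.adj_smul_iff (g : Γ ≃g Γ)).mpr hw
    rwa [hgα] at this

theorem card_neighborSetSubMulAction [Fintype V] [DecidableRel Γ.Adj]
    (G : Subgroup (Γ ≃g Γ)) (α : V) : Nat.card (neighborSetSubMulAction G α) = Γ.degree α := by
  rw [← card_neighborSet_eq_degree, ← Nat.card_eq_fintype_card]
  rfl

theorem isPretransitive_neighborSetSubMulAction {G : Subgroup (Γ ≃g Γ)}
    (harc : ∀ ⦃u v u' v' : V⦄, Γ.Adj u v → Γ.Adj u' v' → ∃ g ∈ G, g • u = u' ∧ g • v = v')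
    (α : V) : IsPretransitive (stabilizer G α) (neighborSetSubMulAction G α) where
  exists_smul_eq := by
    rintro ⟨v, hv⟩ ⟨w, hw⟩
    obtain ⟨g, hgG, hgα, hgv⟩ := harc hv hw
    exact ⟨⟨⟨g, hgG⟩, hgα⟩, Subtype.ext hgv⟩

variable {G : Subgroup (Γ ≃g Γ)} {N : Subgroup G} {α : V}

/-- Conjugating by an element of `G` carrying `α` to `β` transfers `hloc` from `α` to `β`. -/
theorem smul_eq_of_smul_eq_of_adj [N.Normal] (htrans : ∀ β, ∃ g ∈ G, g • α = β)
    (hloc : ∀ n ∈ stabilizer N α, ∀ w, Γ.Adj α w → n • w = w)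
    {n : N} {β w : V} (hβ : n • β = β) (hw : Γ.Adj β w) : n • w = w := by
  obtain ⟨g, hgG, rfl⟩ := htrans β
  set k : G := ⟨g, hgG⟩
  let n' : N := ⟨k⁻¹ * n * k, Subgroup.Normal.conj_mem' ‹_› _ n.2 k⟩
  have hsmul : ∀ x : V, n' • x = k⁻¹ • n • k • x := fun x => by
    change (k⁻¹ * n * k) • x = _
    rw [mul_smul, mul_smul]
    rfl
  have hn'α : n' ∈ stabilizer N α := by
    change n' • α = α
    rw [hsmul]
    exact inv_smul_eq_iff.mpr hβ
  have hadj : Γ.Adj α (k⁻¹ • w) := by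
    have := (g⁻¹).adj_smul_iff.mpr hw
    rwa [inv_smul_smul] at this
  have := hloc n' hn'α _ hadj
  rw [hsmul, smul_inv_smul] at this
  exact (smul_left_cancel_iff _).mp this

theorem stabilizer_eq_bot_of_forall_adj_smul_eq [N.Normal] (hconn : Γ.Preconnected)
    (htrans : ∀ β, ∃ g ∈ G, g • α = β)
    (hloc : ∀ n ∈ stabilizer N α, ∀ w, Γ.Adj α w → n • w = w) : stabilizer N α = ⊥ := by
  refine (Subgroup.eq_bot_iff_forall _).mpr fun n hn => Subtype.ext <| Subtype.ext <|
    RelIso.ext fun v => ?_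
  exact (hconn α v).mem_of_forall_adj_mem (s := {v | n • v = v})
    (fun _ _ hadj hv => smul_eq_of_smul_eq_of_adj htrans hloc hv hadj) hn

end SimpleGraph

theorem five_dvd_nontrivial_normal_stabilizer
    {V : Type*} [Fintype V] (Γ : SimpleGraph V) [DecidableRel Γ.Adj]
    (hconn : Γ.Connected) (hdeg : ∀ v : V, Γ.degree v = 5)
    (G : Subgroup (Γ ≃g Γ))
    (harc : ∀ ⦃u v u' v' : V⦄, Γ.Adj u v → Γ.Adj u' v' →
      ∃ g ∈ G, g • u = u' ∧ g • v = v')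
    (N : Subgroup G) (hnorm : N.Normal) (α : V)
    (hne : MulAction.stabilizer N α ≠ ⊥) :
    5 ∣ Nat.card (MulAction.stabilizer N α) := by
  have hnbr (v : V) : ∃ w, Γ.Adj v w := (Γ.degree_pos_iff_exists_adj v).mp (by rw [hdeg]; norm_num)
  have htrans (β : V) : ∃ g ∈ G, g • α = β := by
    obtain ⟨g, hgG, hgα, -⟩ := harc (hnbr α).choose_spec (hnbr β).choose_spec
    exact ⟨g, hgG, hgα⟩
  set K := stabilizer G α
  set X := SimpleGraph.neighborSetSubMulAction G α
  have := SimpleGraph.isPretransitive_neighborSetSubMulAction harc α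
  have hX : Nat.card X = 5 := (SimpleGraph.card_neighborSetSubMulAction G α).trans (hdeg α)
  have hfix : fixedPoints (N.subgroupOf K) X ≠ Set.univ := by
    refine fun h => hne (SimpleGraph.stabilizer_eq_bot_of_forall_adj_smul_eq hconn.preconnected
      htrans fun n hn w hw => ?_)
    exact congrArg Subtype.val (Set.eq_univ_iff_forall.mp h ⟨w, hw⟩ ⟨⟨n, hn⟩, n.2⟩)
  have hcard : Nat.card (stabilizer N α) = Nat.card (N.subgroupOf K) := by
    rw [Subgroup.card_subgroupOf_comm]
    rfl
  rw [hcard, ← hX]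
  exact card_dvd_card_of_normal_of_prime_card (hX ▸ Nat.prime_five) hfix
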